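/- Let q = 3^s and f(X) = X³ − a₂X² − a₁X − a₀ ∈ F_q[X] with a₂ ≠ 0. Then f is irreducible over F_q if and only if there exists b ∈ F_q with a₂⁴/(a₂²a₁² + a₁³ − a₀a₂³) = b² and Tr_{F_q/F_3}(1/(a₂b)) ≠ 0. -/

import Mathlib

/-!
Put `D = a₂²a₁² + a₁³ − a₀a₂³`. In characteristic 3 the substitution `x = w⁻¹ + a₁/a₂` turns
`a₂³w³ f(x)` into `D w³ − a₂⁴ w + a₂³`, so `f` has a root iff the additive map `w ↦ D w³ − a₂⁴ w`
takes the value `−a₂³`. If `a₂⁴/D` is not a square this map has trivial kernel, hence is onto and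
`f` has a root. If `a₂⁴/D = b²`, the scaling `w = b u` turns the equation into
`u³ − u = −1/(a₂ b)`, which by the Artin–Schreier form of additive Hilbert 90 is solvable iff
`Tr(1/(a₂ b)) = 0`. Finally, a cubic is irreducible iff it has no root.
-/

open Polynomial

namespace FiniteField

variable {K L : Type*} [Field K] [Fintype K] [Field L] [Finite L] [Algebra K L]

theorem _root_.Algebra.trace_pow_card (x : L) :
    Algebra.trace K L (x ^ Fintype.card K) = Algebra.trace K L x :=
  Algebra.trace_eq_of_algEquiv (frobeniusAlgEquivOfAlgebraic K L) x

theorem pow_card_eq_self_iff_mem_range_algebraMap {u : L} :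
    u ^ Fintype.card K = u ↔ u ∈ Set.range (algebraMap K L) := by
  have : FiniteDimensional K L := Module.Finite.of_finite
  rw [IsGalois.mem_range_algebraMap_iff_fixed]
  refine ⟨fun hu σ ↦ ?_, fun hu ↦ hu (frobeniusAlgEquivOfAlgebraic K L)⟩
  obtain ⟨n, rfl⟩ := (bijective_frobeniusAlgEquivOfAlgebraic_pow K L).2 σ
  rw [AlgEquiv.coe_pow, coe_frobeniusAlgEquivOfAlgebraic]
  exact Function.iterate_fixed hu _

theorem exists_pow_card_sub_self_eq_iff_trace_eq_zero (c : L) :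
    (∃ u : L, u ^ Fintype.card K - u = c) ↔ Algebra.trace K L c = 0 := by
  have : FiniteDimensional K L := Module.Finite.of_finite
  let φ : L →ₗ[K] L := (frobeniusAlgHom K L).toLinearMap - LinearMap.id
  have hφ (u : L) : φ u = u ^ Fintype.card K - u := rfl
  have hle : LinearMap.range φ ≤ LinearMap.ker (Algebra.trace K L) := by
    rintro _ ⟨u, rfl⟩
    rw [LinearMap.mem_ker, hφ, map_sub, Algebra.trace_pow_card, sub_self]
  have hker : LinearMap.ker φ = LinearMap.range (Algebra.linearMap K L) := by
    ext u
    rw [LinearMap.mem_ker, hφ, sub_eq_zero, pow_card_eq_self_iff_mem_range_algebraMap]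
    rfl
  have hrank := LinearMap.finrank_range_add_finrank_ker φ
  have hrank_trace := LinearMap.finrank_range_add_finrank_ker (Algebra.trace K L)
  rw [hker, LinearMap.finrank_range_of_inj (f := Algebra.linearMap K L)
    (algebraMap K L).injective, Module.finrank_self] at hrank
  rw [LinearMap.range_eq_top.mpr (Algebra.trace_surjective K L), finrank_top,
    Module.finrank_self] at hrank_trace
  rw [← LinearMap.mem_ker, ← Submodule.eq_of_le_of_finrank_eq hle (by omega)]
  rfl

end FiniteField

section LinearizedBinomial

variable {p : ℕ} [hp : Fact p.Prime] {F : Type*} [Field F]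

theorem mul_pow_sub_mul_of_div_eq_pow_pred {D A b : F} (hD : D ≠ 0)
    (hb : A / D = b ^ (p - 1)) (u : F) :
    D * (b * u) ^ p - A * (b * u) = D * b ^ p * (u ^ p - u) := by
  rw [div_eq_iff hD] at hb
  rw [hb, mul_pow, ← pow_sub_one_mul hp.out.ne_zero b]
  ring

theorem surjective_mul_pow_char_sub_mul [CharP F p] [Finite F] {D A : F} (hD : D ≠ 0)
    (hA : ¬∃ b, A / D = b ^ (p - 1)) : Function.Surjective fun w : F ↦ D * w ^ p - A * w := by
  refine Finite.injective_iff_surjective.1 fun w₁ w₂ h ↦ sub_eq_zero.1 <| by_contra fun hw ↦ ?_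
  have hroot : D * (w₁ - w₂) ^ p = A * (w₁ - w₂) := by
    rw [sub_pow_char]
    linear_combination h
  refine hA ⟨w₁ - w₂, ?_⟩
  rw [div_eq_iff hD, ← mul_left_inj' hw]
  linear_combination -hroot - D * pow_sub_one_mul hp.out.ne_zero (w₁ - w₂)

theorem exists_mul_pow_sub_mul_eq_iff_trace_eq_zero [Algebra (ZMod p) F] [Finite F]
    {D A b : F} (hD : D ≠ 0) (hb₀ : b ≠ 0) (hb : A / D = b ^ (p - 1)) (c : F) :
    (∃ w, D * w ^ p - A * w = c) ↔ Algebra.trace (ZMod p) F (c / (D * b ^ p)) = 0 := by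
  have hDb : D * b ^ p ≠ 0 := mul_ne_zero hD (pow_ne_zero p hb₀)
  rw [← FiniteField.exists_pow_card_sub_self_eq_iff_trace_eq_zero, ZMod.card]
  constructor
  · rintro ⟨w, rfl⟩
    refine ⟨w / b, ?_⟩
    rw [eq_div_iff hDb, mul_comm, ← mul_pow_sub_mul_of_div_eq_pow_pred hD hb, mul_div_cancel₀ w hb₀]
  · rintro ⟨u, hu⟩
    exact ⟨b * u, by rw [mul_pow_sub_mul_of_div_eq_pow_pred hD hb, hu, mul_div_cancel₀ c hDb]⟩

end LinearizedBinomial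

section Cubic

variable {F : Type*} [Field F] {a₀ a₁ a₂ : F}

theorem irreducible_cubic_iff_forall_ne_zero :
    Irreducible (X ^ 3 - C a₂ * X ^ 2 - C a₁ * X - C a₀) ↔
      ∀ x : F, x ^ 3 - a₂ * x ^ 2 - a₁ * x - a₀ ≠ 0 := by
  have hdeg : (X ^ 3 - C a₂ * X ^ 2 - C a₁ * X - C a₀).natDegree = 3 := by compute_degree!
  have hne : X ^ 3 - C a₂ * X ^ 2 - C a₁ * X - C a₀ ≠ 0 :=
    ne_zero_of_natDegree_gt (n := 0) (by omega)
  rw [irreducible_iff_roots_eq_zero_of_degree_le_three (by omega) (by omega),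
    Multiset.eq_zero_iff_forall_notMem]
  simp [mem_roots hne]

section CharThree

variable [CharP F 3]

theorem cubic_eval_div (ha₂ : a₂ ≠ 0) :
    a₂ ^ 3 * ((a₁ / a₂) ^ 3 - a₂ * (a₁ / a₂) ^ 2 - a₁ * (a₁ / a₂) - a₀) =
      a₂ ^ 2 * a₁ ^ 2 + a₁ ^ 3 - a₀ * a₂ ^ 3 := by
  field_simp
  linear_combination (-a₁ ^ 2 * a₂ ^ 2) * CharP.cast_eq_zero F 3

theorem cubic_eval_inv_add_div (ha₂ : a₂ ≠ 0) {w : F} (hw : w ≠ 0) :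
    a₂ ^ 3 * w ^ 3 * ((w⁻¹ + a₁ / a₂) ^ 3 - a₂ * (w⁻¹ + a₁ / a₂) ^ 2 - a₁ * (w⁻¹ + a₁ / a₂) - a₀) =
      (a₂ ^ 2 * a₁ ^ 2 + a₁ ^ 3 - a₀ * a₂ ^ 3) * w ^ 3 - a₂ ^ 4 * w + a₂ ^ 3 := by
  field_simp
  linear_combination (w * a₂ ^ 2 * a₁ + w ^ 2 * a₂ * a₁ ^ 2 - w ^ 2 * a₂ ^ 3 * a₁
    - w ^ 3 * a₂ ^ 2 * a₁ ^ 2) * CharP.cast_eq_zero F 3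

theorem exists_cubic_root_iff (ha₂ : a₂ ≠ 0)
    (hden : a₂ ^ 2 * a₁ ^ 2 + a₁ ^ 3 - a₀ * a₂ ^ 3 ≠ 0) :
    (∃ x : F, x ^ 3 - a₂ * x ^ 2 - a₁ * x - a₀ = 0) ↔
      ∃ w : F, (a₂ ^ 2 * a₁ ^ 2 + a₁ ^ 3 - a₀ * a₂ ^ 3) * w ^ 3 - a₂ ^ 4 * w = -a₂ ^ 3 := by
  constructor
  · rintro ⟨x, hx⟩
    have hx₀ : x - a₁ / a₂ ≠ 0 := by
      rw [sub_ne_zero]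
      rintro rfl
      exact hden (by rw [← cubic_eval_div ha₂, hx, mul_zero])
    refine ⟨(x - a₁ / a₂)⁻¹, ?_⟩
    have h := cubic_eval_inv_add_div (a₀ := a₀) (a₁ := a₁) ha₂ (inv_ne_zero hx₀)
    rw [inv_inv, sub_add_cancel, hx, mul_zero] at h
    linear_combination -h
  · rintro ⟨w, hw⟩
    have hw₀ : w ≠ 0 := by
      rintro rfl
      exact pow_ne_zero 3 ha₂ (by linear_combination hw)
    refine ⟨w⁻¹ + a₁ / a₂, (mul_eq_zero.1 ?_).resolve_left
      (mul_ne_zero (pow_ne_zero 3 ha₂) (pow_ne_zero 3 hw₀))⟩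
    rw [cubic_eval_inv_add_div ha₂ hw₀]
    linear_combination hw

theorem not_irreducible_cubic_of_not_exists_sq [Finite F] (ha₂ : a₂ ≠ 0)
    (hden : a₂ ^ 2 * a₁ ^ 2 + a₁ ^ 3 - a₀ * a₂ ^ 3 ≠ 0)
    (hsq : ¬∃ b, a₂ ^ 4 / (a₂ ^ 2 * a₁ ^ 2 + a₁ ^ 3 - a₀ * a₂ ^ 3) = b ^ 2) :
    ¬Irreducible (X ^ 3 - C a₂ * X ^ 2 - C a₁ * X - C a₀) := by
  rw [irreducible_cubic_iff_forall_ne_zero, ← not_exists, not_not, exists_cubic_root_iff ha₂ hden]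
  exact surjective_mul_pow_char_sub_mul (p := 3) hden hsq _

end CharThree

theorem irreducible_cubic_iff_trace_ne_zero [Algebra (ZMod 3) F] [Finite F] (ha₂ : a₂ ≠ 0)
    (hden : a₂ ^ 2 * a₁ ^ 2 + a₁ ^ 3 - a₀ * a₂ ^ 3 ≠ 0) {b : F}
    (hb : a₂ ^ 4 / (a₂ ^ 2 * a₁ ^ 2 + a₁ ^ 3 - a₀ * a₂ ^ 3) = b ^ 2) :
    Irreducible (X ^ 3 - C a₂ * X ^ 2 - C a₁ * X - C a₀) ↔
      Algebra.trace (ZMod 3) F (1 / (a₂ * b)) ≠ 0 := by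
  have : CharP F 3 := charP_of_injective_algebraMap' (ZMod 3) 3
  have hb₀ : b ≠ 0 := by
    rintro rfl
    simp [ha₂, hden] at hb
  rw [irreducible_cubic_iff_forall_ne_zero, ← not_exists, exists_cubic_root_iff ha₂ hden,
    exists_mul_pow_sub_mul_eq_iff_trace_eq_zero hden hb₀ hb, not_iff_not]
  rw [div_eq_iff hden] at hb
  have h : -a₂ ^ 3 / ((a₂ ^ 2 * a₁ ^ 2 + a₁ ^ 3 - a₀ * a₂ ^ 3) * b ^ 3) = -(1 / (a₂ * b)) := by
    rw [div_eq_iff (mul_ne_zero hden (pow_ne_zero 3 hb₀))]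
    field_simp
    linear_combination -hb
  rw [h, map_neg, neg_eq_zero]

end Cubic

theorem cubic_irreducible_general_general
    {F : Type*} [Field F] [Fintype F] [Algebra (ZMod 3) F]
    (a₀ a₁ a₂ : F) (ha₂ : a₂ ≠ 0)
    (hden : a₂ ^ 2 * a₁ ^ 2 + a₁ ^ 3 - a₀ * a₂ ^ 3 ≠ 0) :
    Irreducible (X ^ 3 - C a₂ * X ^ 2 - C a₁ * X - C a₀) ↔
      ∃ b : F, a₂ ^ 4 / (a₂ ^ 2 * a₁ ^ 2 + a₁ ^ 3 - a₀ * a₂ ^ 3) = b ^ 2 ∧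
        Algebra.trace (ZMod 3) F (1 / (a₂ * b)) ≠ 0 := by
  refine ⟨fun hirr ↦ ?_, fun ⟨b, hb, htr⟩ ↦ (irreducible_cubic_iff_trace_ne_zero ha₂ hden hb).2 htr⟩
  have : CharP F 3 := charP_of_injective_algebraMap' (ZMod 3) 3
  obtain ⟨b, hb⟩ := not_not.1 fun hsq ↦ not_irreducible_cubic_of_not_exists_sq ha₂ hden hsq hirr
  exact ⟨b, hb, (irreducible_cubic_iff_trace_ne_zero ha₂ hden hb).1 hirr⟩

/-- For f(X) = X³ − a₂X² − a₁X − a₀ over F_q, q = 3^s, with a₂ ≠ 0 (and the implicit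
nondegeneracy a₂²a₁² + a₁³ − a₀a₂³ ≠ 0): f is irreducible over F_q iff
a₂⁴/(a₂²a₁² + a₁³ − a₀a₂³) = b² for some b with Tr_{F_q/F_3}(1/(a₂b)) ≠ 0. -/
theorem cubic_irreducible_general (s : ℕ) (hs : 1 ≤ s)
    {F : Type*} [Field F] [Fintype F] [Algebra (ZMod 3) F]
    (hcard : Fintype.card F = 3 ^ s)
    (a₀ a₁ a₂ : F) (ha₂ : a₂ ≠ 0)
    (hden : a₂ ^ 2 * a₁ ^ 2 + a₁ ^ 3 - a₀ * a₂ ^ 3 ≠ 0) :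
    Irreducible (X ^ 3 - C a₂ * X ^ 2 - C a₁ * X - C a₀) ↔
      ∃ b : F, a₂ ^ 4 / (a₂ ^ 2 * a₁ ^ 2 + a₁ ^ 3 - a₀ * a₂ ^ 3) = b ^ 2 ∧
        Algebra.trace (ZMod 3) F (1 / (a₂ * b)) ≠ 0 :=
  cubic_irreducible_general_general a₀ a₁ a₂ ha₂ hden
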